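/- arXiv:2002.04470 — 2 statements merged into one kernel-verified Lean document; each statement's English description precedes it below -/
import Mathlib

section
/- If X and Y are independent generalized Poisson random variables with parameters (θ₁, λ) and (θ₂, λ) respectively, then X + Y follows a generalized Poisson distribution with parameters (θ₁ + θ₂, λ). -/
open MeasureTheory ProbabilityTheory

/-- The generalized Poisson pmf `GP(θ, λ)`:
`P(X = k) = θ (θ + kλ)^(k-1) e^{-θ-kλ} / k!`. -/
noncomputable def gpPmf (θ lam : ℝ) (k : ℕ) : ℝ :=
  θ * (θ + k * lam) ^ ((k : ℝ) - 1) / (Nat.factorial k) * Real.exp (-θ - k * lam)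

/-- `X` follows a generalized Poisson distribution `GP(θ, λ)` under `P`. -/
def HasGP {Ω : Type*} [MeasurableSpace Ω] (P : Measure Ω) (X : Ω → ℕ) (θ lam : ℝ) : Prop :=
  ∀ k : ℕ, P {ω | X ω = k} = ENNReal.ofReal (gpPmf θ lam k)

/-!
Up to the factor `e^{-θ-kλ}`, whose product over a split `k = i + j` only depends on `k` and on
`θ₁ + θ₂`, the pmf is `A_k(θ) = θ (θ + kλ)^(k-1) / k!`, a normalized Abel polynomial. These
satisfy `A_{k+1}' = A_k(· + λ)` and `A_k(0) = 0` for `k > 0`, so differentiating in `x` and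
inducting on `n` gives Abel's identity `A_n(x + y) = ∑_{i+j=n} A_i(x) A_j(y)`, which is exactly
the convolution of the two pmfs. Independence turns `P(X + Y = n)` into that convolution.
-/

open Finset Nat

noncomputable def abelPoly (a : ℝ) : ℕ → ℝ → ℝ
  | 0, _ => 1
  | n + 1, x => x * (x + (n + 1) * a) ^ n / (n + 1)!

@[simp]
theorem abelPoly_zero (a x : ℝ) : abelPoly a 0 x = 1 := rfl

@[simp]
theorem abelPoly_succ_zero (a : ℝ) (n : ℕ) : abelPoly a (n + 1) 0 = 0 := by
  simp [abelPoly]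

theorem hasDerivAt_abelPoly_succ (a : ℝ) (n : ℕ) (x : ℝ) :
    HasDerivAt (abelPoly a (n + 1)) (abelPoly a n (x + a)) x := by
  cases n with
  | zero =>
    have h : abelPoly a 1 = fun t ↦ t := funext fun t ↦ by simp [abelPoly]
    simpa [h] using hasDerivAt_id' x
  | succ m =>
    have h := ((hasDerivAt_id' x).fun_mul
      (((hasDerivAt_id' x).add_const ((((m + 1 : ℕ) : ℝ) + 1) * a)).fun_pow (m + 1))).div_const
      ((m + 1 + 1)! : ℝ)
    refine h.congr_deriv ?_
    simp only [abelPoly, factorial_succ (m + 1), add_tsub_cancel_right]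
    push_cast
    field_simp
    ring

theorem abelPoly_add (a : ℝ) (n : ℕ) (x y : ℝ) :
    abelPoly a n (x + y) = ∑ p ∈ antidiagonal n, abelPoly a p.1 x * abelPoly a p.2 y := by
  induction n generalizing x with
  | zero => simp
  | succ n ih =>
    have hlhs (t : ℝ) :
        HasDerivAt (fun t ↦ abelPoly a (n + 1) (t + y)) (abelPoly a n (t + y + a)) t :=
      (hasDerivAt_abelPoly_succ a n (t + y)).comp_add_const t y
    have hrhs (t : ℝ) :
        HasDerivAt (fun t ↦ ∑ p ∈ antidiagonal (n + 1), abelPoly a p.1 t * abelPoly a p.2 y)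
          (abelPoly a n (t + y + a)) t := by
      simp only [Nat.sum_antidiagonal_succ, abelPoly_zero, one_mul]
      rw [add_right_comm, ih]
      exact (HasDerivAt.fun_sum fun p _ ↦
        (hasDerivAt_abelPoly_succ a p.1 t).mul_const _).const_add _
    have hfun := eq_of_fderiv_eq (fun t ↦ (hlhs t).differentiableAt)
      (fun t ↦ (hrhs t).differentiableAt)
      (fun t ↦ by rw [(hlhs t).hasFDerivAt.fderiv, (hrhs t).hasFDerivAt.fderiv]) 0
      (by simp [Nat.sum_antidiagonal_succ])
    exact congrFun hfun x

theorem gpPmf_eq_abelPoly_mul_exp {θ : ℝ} (lam : ℝ) (hθ : θ ≠ 0) (k : ℕ) :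
    gpPmf θ lam k = abelPoly lam k θ * Real.exp (-θ - k * lam) := by
  cases k with
  | zero => simp [gpPmf, Real.rpow_neg_one, hθ]
  | succ n =>
    rw [gpPmf, show ((n + 1 : ℕ) : ℝ) - 1 = n by push_cast; ring, Real.rpow_natCast]
    simp only [abelPoly]
    push_cast
    ring

theorem gpPmf_nonneg {θ lam : ℝ} (hθ : 0 ≤ θ) (hlam : 0 ≤ lam) (k : ℕ) : 0 ≤ gpPmf θ lam k := by
  unfold gpPmf
  have hbase : 0 ≤ θ + k * lam := add_nonneg hθ (mul_nonneg k.cast_nonneg hlam)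
  positivity

theorem sum_antidiagonal_gpPmf_mul {θ₁ θ₂ : ℝ} (lam : ℝ) (h₁ : θ₁ ≠ 0) (h₂ : θ₂ ≠ 0)
    (h₁₂ : θ₁ + θ₂ ≠ 0) (n : ℕ) :
    ∑ p ∈ antidiagonal n, gpPmf θ₁ lam p.1 * gpPmf θ₂ lam p.2 = gpPmf (θ₁ + θ₂) lam n := by
  rw [gpPmf_eq_abelPoly_mul_exp lam h₁₂, abelPoly_add, sum_mul]
  refine sum_congr rfl fun p hp ↦ ?_
  rw [gpPmf_eq_abelPoly_mul_exp lam h₁, gpPmf_eq_abelPoly_mul_exp lam h₂, ← HasAntidiagonal.mem_antidiagonal.mp hp]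
  calc _ = abelPoly lam p.1 θ₁ * abelPoly lam p.2 θ₂ *
        Real.exp (-θ₁ - p.1 * lam + (-θ₂ - p.2 * lam)) := by rw [Real.exp_add]; ring
    _ = _ := by push_cast; ring_nf

theorem ProbabilityTheory.IndepFun.measure_add_eq_sum_antidiagonal {Ω M : Type*}
    [MeasurableSpace Ω] {P : Measure Ω} [AddMonoid M] [HasAntidiagonal M] [MeasurableSpace M]
    [MeasurableSingletonClass M] {X Y : Ω → M} (hindep : IndepFun X Y P) (hX : Measurable X)
    (hY : Measurable Y) (n : M) :
    P {ω | X ω + Y ω = n} = ∑ p ∈ antidiagonal n, P {ω | X ω = p.1} * P {ω | Y ω = p.2} := by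
  have hsplit : {ω | X ω + Y ω = n} = ⋃ p ∈ antidiagonal n, X ⁻¹' {p.1} ∩ Y ⁻¹' {p.2} := by
    ext ω
    simp [HasAntidiagonal.mem_antidiagonal]
  have hdisj : (antidiagonal n : Set (M × M)).PairwiseDisjoint
      fun p ↦ X ⁻¹' {p.1} ∩ Y ⁻¹' {p.2} := by
    rintro p - q - hpq
    refine Set.disjoint_left.mpr ?_
    rintro ω ⟨hp₁, hp₂⟩ ⟨hq₁, hq₂⟩
    exact hpq (Prod.ext (hp₁.symm.trans hq₁) (hp₂.symm.trans hq₂))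
  rw [hsplit, measure_biUnion_finset hdisj fun p _ ↦
    (hX (measurableSet_singleton _)).inter (hY (measurableSet_singleton _))]
  exact sum_congr rfl fun p _ ↦
    hindep.measure_inter_preimage_eq_mul _ _ (measurableSet_singleton _) (measurableSet_singleton _)

theorem gp_convolution_general {Ω : Type*} [MeasurableSpace Ω] (P : Measure Ω)
    (X Y : Ω → ℕ) (θ1 θ2 lam : ℝ) (hθ1 : 0 < θ1) (hθ2 : 0 < θ2)
    (hlam0 : 0 ≤ lam)
    (hXm : Measurable X) (hYm : Measurable Y)
    (hX : HasGP P X θ1 lam) (hY : HasGP P Y θ2 lam)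
    (hindep : IndepFun X Y P) :
    HasGP P (fun ω => X ω + Y ω) (θ1 + θ2) lam := by
  intro n
  have hnonneg (p : ℕ × ℕ) (_ : p ∈ antidiagonal n) :
      0 ≤ gpPmf θ1 lam p.1 * gpPmf θ2 lam p.2 :=
    mul_nonneg (gpPmf_nonneg hθ1.le hlam0 _) (gpPmf_nonneg hθ2.le hlam0 _)
  rw [show P {ω | X ω + Y ω = n} = _ from hindep.measure_add_eq_sum_antidiagonal hXm hYm n,
    ← sum_antidiagonal_gpPmf_mul lam hθ1.ne' hθ2.ne' (add_pos hθ1 hθ2).ne',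
    ENNReal.ofReal_sum_of_nonneg hnonneg]
  refine sum_congr rfl fun p _ ↦ ?_
  rw [hX, hY, ENNReal.ofReal_mul (gpPmf_nonneg hθ1.le hlam0 _)]

/-- Convolution property: the sum of two independent generalized Poisson random variables
with parameters `(θ₁, λ)` and `(θ₂, λ)` follows a generalized Poisson distribution with
parameters `(θ₁ + θ₂, λ)`. -/
theorem gp_convolution {Ω : Type*} [MeasurableSpace Ω] (P : Measure Ω) [IsProbabilityMeasure P]
    (X Y : Ω → ℕ) (θ1 θ2 lam : ℝ) (hθ1 : 0 < θ1) (hθ2 : 0 < θ2)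
    (hlam0 : 0 ≤ lam) (hlam1 : lam < 1)
    (hXm : Measurable X) (hYm : Measurable Y)
    (hX : HasGP P X θ1 lam) (hY : HasGP P Y θ2 lam)
    (hindep : IndepFun X Y P) :
    HasGP P (fun ω => X ω + Y ω) (θ1 + θ2) lam :=
  gp_convolution_general P X Y θ1 θ2 lam hθ1 hθ2 hlam0 hXm hYm hX hY hindep
end

section
/- If X and Y are independent generalized Poisson difference random variables with parameters (θ₁, θ₂, λ) and (θ₃, θ₄, λ), then X + Y is a generalized Poisson difference random variable with parameters (θ₁ + θ₃, θ₂ + θ₄, λ). -/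
/-!
Under `GPD(θ₁, θ₂, λ)` a variable is distributed as `X' - Y'` with `X' ~ GP(θ₁, λ)` and
`Y' ~ GP(θ₂, λ)` independent, so its law is the convolution `GP(θ₁, λ) ∗ (-GP(θ₂, λ))` of measures
on `ℤ`. Generalized Poisson laws with a common `λ` are closed under convolution,
`GP(θ, λ) ∗ GP(θ', λ) = GP(θ + θ', λ)`: this is Abel's binomial identity
`∑ₖ C(n, k) x (x + k λ)^(k-1) y (y + (n-k) λ)^(n-k-1) = (x + y) (x + y + n λ)^(n-1)`.
As convolution is associative and commutative, the law of `X + Y` is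
`(GP(θ₁) ∗ GP(θ₃)) ∗ (-(GP(θ₂) ∗ GP(θ₄))) = GPD(θ₁ + θ₃, θ₂ + θ₄, λ)`.
The hypothesis `λ < 1` makes the GP weights summable, so that the real series `gpdPmf` is the
mass of a singleton under this law.
-/

open MeasureTheory ProbabilityTheory

/-- The generalized Poisson difference pmf `GPD(θ₁, θ₂, λ)`:
`P(Z = z) = e^{-θ₁-θ₂-zλ} ∑_{s ≥ max(0,-z)} [θ₂(θ₂+sλ)^{s-1}/s!]·[θ₁(θ₁+(s+z)λ)^{s+z-1}/(s+z)!]·e^{-2sλ}`. -/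
noncomputable def gpdPmf (θ1 θ2 lam : ℝ) (z : ℤ) : ℝ :=
  Real.exp (-θ1 - θ2 - z * lam) *
    ∑' s : ℕ, if 0 ≤ (s : ℤ) + z then
      (θ2 * (θ2 + s * lam) ^ ((s : ℝ) - 1) / (Nat.factorial s)) *
      (θ1 * (θ1 + ((s : ℝ) + (z : ℝ)) * lam) ^ (((s : ℝ) + (z : ℝ)) - 1) /
        (Nat.factorial ((s : ℤ) + z).toNat)) *
      Real.exp (-2 * s * lam)
    else 0

/-- `Z` follows a generalized Poisson difference distribution `GPD(θ₁, θ₂, λ)` under `P`,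
i.e. `Z` is distributed as the difference of two independent `GP(θ₁, λ)` and `GP(θ₂, λ)`
random variables. -/
def HasGPD {Ω : Type*} [MeasurableSpace Ω] (P : Measure Ω) (Z : Ω → ℤ) (θ1 θ2 lam : ℝ) : Prop :=
  ∀ z : ℤ, P {ω | Z ω = z} = ENNReal.ofReal (gpdPmf θ1 θ2 lam z)

open Finset
open scoped ENNReal Nat

namespace MeasureTheory.Measure

theorem conv_apply_singleton_eq_sum_antidiagonal {M : Type*} [AddMonoid M] [HasAntidiagonal M]
    [MeasurableSpace M] [MeasurableSingletonClass M] [MeasurableAdd₂ M] (μ ν : Measure M) [SFinite ν]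
    (n : M) : (μ ∗ ν) {n} = ∑ p ∈ antidiagonal n, μ {p.1} * ν {p.2} := by
  have hpre : (fun p : M × M => p.1 + p.2) ⁻¹' {n} = ↑(antidiagonal n) := by
    ext p; simp
  rw [conv, map_apply measurable_add (measurableSet_singleton n), hpre, ← sum_measure_singleton]
  refine Finset.sum_congr rfl fun p _ => ?_
  rw [← Set.singleton_prod_singleton, prod_prod]

theorem conv_apply_singleton {G : Type*} [AddGroup G] [MeasurableSpace G]
    [MeasurableSingletonClass G] [MeasurableAdd₂ G] (μ ν : Measure G) [SFinite μ] [SFinite ν]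
    (z : G) : (μ ∗ ν) {z} = ∫⁻ y, μ {z - y} ∂ν := by
  rw [conv, map_apply measurable_add (measurableSet_singleton z),
    prod_apply_symm (measurable_add (measurableSet_singleton z))]
  refine lintegral_congr fun y => ?_
  congr 1
  ext x
  simp [eq_sub_iff_add_eq]

theorem conv_conv_conv_comm {M : Type*} [AddCommMonoid M] [MeasurableSpace M] [MeasurableAdd₂ M]
    (μ ν ρ τ : Measure M) [SFinite μ] [SFinite ν] [SFinite ρ] [SFinite τ] :
    (μ ∗ ν) ∗ (ρ ∗ τ) = (μ ∗ ρ) ∗ (ν ∗ τ) := by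
  rw [conv_assoc, ← conv_assoc ν, conv_comm ν ρ, conv_assoc, ← conv_assoc]

end MeasureTheory.Measure

namespace GeneralizedPoisson

noncomputable def abelPoly (z : ℝ) : ℕ → ℝ → ℝ
  | 0, _ => 1
  | n + 1, x => x * (x + (n + 1) * z) ^ n

variable {z : ℝ}

@[simp] theorem abelPoly_zero (x : ℝ) : abelPoly z 0 x = 1 := rfl

theorem abelPoly_succ (n : ℕ) (x : ℝ) : abelPoly z (n + 1) x = x * (x + (n + 1) * z) ^ n := rfl

theorem abelPoly_succ_apply_zero (n : ℕ) : abelPoly z (n + 1) 0 = 0 := by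
  simp [abelPoly_succ]

theorem hasDerivAt_abelPoly_succ (n : ℕ) (x : ℝ) :
    HasDerivAt (abelPoly z (n + 1)) ((n + 1) * abelPoly z n (x + z)) x := by
  show HasDerivAt (fun x => x * (x + (n + 1) * z) ^ n) _ x
  refine ((hasDerivAt_id' x).fun_mul
    (((hasDerivAt_id' x).add_const ((n + 1) * z)).fun_pow n)).congr_deriv ?_
  cases n with
  | zero => simp
  | succ m =>
    simp only [abelPoly_succ, Nat.cast_add, Nat.cast_one, Nat.add_sub_cancel]
    ring

theorem hasDerivAt_sum_antidiagonal_choose_mul_abelPoly (n : ℕ) (x y : ℝ) :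
    HasDerivAt (fun y => ∑ p ∈ antidiagonal (n + 1),
        ((n + 1).choose p.1 : ℝ) * abelPoly z p.1 x * abelPoly z p.2 y)
      ((n + 1) * ∑ p ∈ antidiagonal n, (n.choose p.1 : ℝ) * abelPoly z p.1 x * abelPoly z p.2 (y + z))
      y := by
  simp only [Nat.sum_antidiagonal_succ', abelPoly_zero, mul_one]
  refine ((HasDerivAt.fun_sum (u := antidiagonal n) fun p _ =>
      (hasDerivAt_abelPoly_succ p.2 y).const_mul
        (((n + 1).choose p.1 : ℝ) * abelPoly z p.1 x)).const_add _).congr_deriv ?_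
  rw [mul_sum]
  refine sum_congr rfl fun p hp => ?_
  have hchoose : ((n + 1).choose p.1 : ℝ) * (p.2 + 1) = (n + 1) * n.choose p.1 := by
    rw [HasAntidiagonal.mem_antidiagonal] at hp
    have := Nat.choose_mul_succ_eq n p.1
    rw [show n + 1 - p.1 = p.2 + 1 by omega] at this
    exact_mod_cast this.symm.trans (mul_comm _ _)
  linear_combination (abelPoly z p.1 x * abelPoly z p.2 (y + z)) * hchoose

/-- Abel's binomial identity. -/
theorem sum_antidiagonal_choose_mul_abelPoly (n : ℕ) (x y : ℝ) :
    ∑ p ∈ antidiagonal n, (n.choose p.1 : ℝ) * abelPoly z p.1 x * abelPoly z p.2 y =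
      abelPoly z n (x + y) := by
  induction n generalizing y with
  | zero => simp
  | succ n ih =>
    set f : ℝ → ℝ := fun y =>
      ∑ p ∈ antidiagonal (n + 1), ((n + 1).choose p.1 : ℝ) * abelPoly z p.1 x * abelPoly z p.2 y
    -- Both sides have derivative `(n + 1) * abelPoly z n (x + y + z)` in `y` and agree at `y = 0`.
    have hf : ∀ y, HasDerivAt f ((n + 1) * abelPoly z n (x + y + z)) y := fun y =>
      (hasDerivAt_sum_antidiagonal_choose_mul_abelPoly n x y).congr_deriv (by rw [ih, add_assoc])
    have hg : ∀ y, HasDerivAt (fun y => abelPoly z (n + 1) (x + y))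
        ((n + 1) * abelPoly z n (x + y + z)) y :=
      fun y => (hasDerivAt_abelPoly_succ n (x + y)).comp_const_add x y
    have h0 : f 0 = abelPoly z (n + 1) x := by
      simp [f, Nat.sum_antidiagonal_succ', abelPoly_succ_apply_zero]
    have hconst : f y - abelPoly z (n + 1) (x + y) = f 0 - abelPoly z (n + 1) (x + 0) :=
      is_const_of_deriv_eq_zero (fun y => ((hf y).sub (hg y)).differentiableAt)
        (fun y => by simpa using ((hf y).sub (hg y)).deriv) y 0
    rwa [h0, add_zero, sub_self, sub_eq_zero] at hconst

theorem abelPoly_nonneg {x : ℝ} (hx : 0 ≤ x) (hz : 0 ≤ z) (n : ℕ) : 0 ≤ abelPoly z n x := by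
  cases n with
  | zero => simp
  | succ n => rw [abelPoly_succ]; positivity

theorem abelPoly_le_pow {x : ℝ} (hx : 0 ≤ x) (hz : 0 ≤ z) (n : ℕ) :
    abelPoly z n x ≤ (x + n * z) ^ n := by
  cases n with
  | zero => simp
  | succ n =>
    rw [abelPoly_succ, pow_succ', Nat.cast_succ]
    gcongr
    linarith [mul_nonneg (n.cast_add_one_pos (α := ℝ)).le hz]

theorem mul_rpow_sub_one_eq_abelPoly {x : ℝ} (hx : x ≠ 0) (n : ℕ) :
    x * (x + n * z) ^ ((n : ℝ) - 1) = abelPoly z n x := by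
  cases n with
  | zero => simp [Real.rpow_neg_one, hx]
  | succ n =>
    rw [abelPoly_succ, Nat.cast_succ, add_sub_cancel_right, Real.rpow_natCast]

noncomputable def gpWeight (θ lam : ℝ) (n : ℕ) : ℝ :=
  abelPoly lam n θ / n ! * Real.exp (-θ - n * lam)

theorem gpWeight_nonneg {θ lam : ℝ} (hθ : 0 ≤ θ) (hlam : 0 ≤ lam) (n : ℕ) :
    0 ≤ gpWeight θ lam n := by
  have := abelPoly_nonneg hθ hlam n
  unfold gpWeight
  positivity

theorem sum_antidiagonal_gpWeight_mul (θ₁ θ₂ lam : ℝ) (n : ℕ) :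
    ∑ p ∈ antidiagonal n, gpWeight θ₁ lam p.1 * gpWeight θ₂ lam p.2 = gpWeight (θ₁ + θ₂) lam n := by
  have hterm : ∀ p ∈ antidiagonal n, gpWeight θ₁ lam p.1 * gpWeight θ₂ lam p.2 =
      (n.choose p.1 : ℝ) * abelPoly lam p.1 θ₁ * abelPoly lam p.2 θ₂ / n.factorial *
        Real.exp (-(θ₁ + θ₂) - n * lam) := by
    intro p hp
    rw [HasAntidiagonal.mem_antidiagonal] at hp
    subst hp
    have hfact : ((p.1 + p.2).choose p.1 : ℝ) * p.1.factorial * p.2.factorial =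
        (p.1 + p.2).factorial := by
      have := Nat.choose_mul_factorial_mul_factorial (Nat.le_add_right p.1 p.2)
      rw [Nat.add_sub_cancel_left] at this
      exact_mod_cast this
    rw [gpWeight, gpWeight, ← hfact, Nat.cast_add]
    rw [show -(θ₁ + θ₂) - (p.1 + p.2 : ℝ) * lam = (-θ₁ - p.1 * lam) + (-θ₂ - p.2 * lam) by ring,
      Real.exp_add]
    have : ((p.1 + p.2).choose p.1 : ℝ) ≠ 0 :=
      Nat.cast_ne_zero.mpr (Nat.choose_pos (Nat.le_add_right _ _)).ne'
    field_simp
  rw [sum_congr rfl hterm, ← sum_mul, ← sum_div, sum_antidiagonal_choose_mul_abelPoly, gpWeight]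

theorem gpWeight_le_pow {θ lam : ℝ} (hθ : 0 ≤ θ) (hlam : 0 ≤ lam) {n : ℕ} (hn : n ≠ 0) :
    gpWeight θ lam n ≤ ((θ / n + lam) * Real.exp (1 - lam)) ^ n := by
  have hn' : (0 : ℝ) < n := by positivity
  calc gpWeight θ lam n ≤ (θ + n * lam) ^ n / n.factorial * Real.exp (-(n * lam)) := by
        unfold gpWeight
        gcongr
        · exact abelPoly_le_pow hθ hlam n
        · linarith
    _ = (θ / n + lam) ^ n * (n ^ n / n.factorial) * Real.exp (-(n * lam)) := by
        rw [show θ / n + lam = (θ + n * lam) / n by field_simp, div_pow]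
        field_simp
    _ ≤ (θ / n + lam) ^ n * Real.exp n * Real.exp (-(n * lam)) := by
        gcongr
        exact Real.pow_div_factorial_le_exp _ hn'.le n
    _ = ((θ / n + lam) * Real.exp (1 - lam)) ^ n := by
        rw [mul_pow, ← Real.exp_nat_mul, mul_assoc, ← Real.exp_add]
        ring_nf

theorem mul_exp_one_sub_lt_one {lam : ℝ} (hlam : lam ≠ 1) : lam * Real.exp (1 - lam) < 1 := by
  have h := Real.add_one_lt_exp (x := lam - 1) (sub_ne_zero.mpr hlam)
  rw [sub_add_cancel] at h
  calc lam * Real.exp (1 - lam) < Real.exp (lam - 1) * Real.exp (1 - lam) := by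
        gcongr
    _ = 1 := by rw [← Real.exp_add]; simp

theorem summable_gpWeight {θ lam : ℝ} (hθ : 0 ≤ θ) (hlam₀ : 0 ≤ lam) (hlam₁ : lam < 1) :
    Summable (gpWeight θ lam) := by
  obtain ⟨r, hr, hr1⟩ := exists_between (mul_exp_one_sub_lt_one hlam₁.ne)
  have hbase : ∀ᶠ n : ℕ in Filter.atTop, (θ / n + lam) * Real.exp (1 - lam) < r := by
    refine Filter.Tendsto.eventually_lt_const hr ?_
    simpa using ((tendsto_const_div_atTop_nhds_zero_nat θ).add_const lam).mul_const
      (Real.exp (1 - lam))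
  refine Summable.of_norm_bounded_eventually_nat (summable_geometric_of_lt_one
    ((by positivity : 0 ≤ lam * Real.exp (1 - lam)).trans hr.le) hr1) ?_
  filter_upwards [hbase, Filter.eventually_ne_atTop 0] with n hn hn0
  rw [Real.norm_of_nonneg (gpWeight_nonneg hθ hlam₀ n)]
  exact (gpWeight_le_pow hθ hlam₀ hn0).trans (pow_le_pow_left₀ (by positivity) hn.le n)

noncomputable def gpMeasure (θ lam : ℝ) : Measure ℕ :=
  Measure.count.withDensity fun n => ENNReal.ofReal (gpWeight θ lam n)

noncomputable def gpdMeasure (θ₁ θ₂ lam : ℝ) : Measure ℤ :=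
  (gpMeasure θ₁ lam).map (fun n : ℕ => (n : ℤ)) ∗ (gpMeasure θ₂ lam).map (fun n : ℕ => -(n : ℤ))

theorem gpMeasure_singleton (θ lam : ℝ) (n : ℕ) :
    gpMeasure θ lam {n} = ENNReal.ofReal (gpWeight θ lam n) := by
  simp [gpMeasure, withDensity_apply]

theorem gpMeasure_conv {θ₁ θ₂ lam : ℝ} (hθ₁ : 0 ≤ θ₁) (hθ₂ : 0 ≤ θ₂) (hlam : 0 ≤ lam) :
    gpMeasure θ₁ lam ∗ gpMeasure θ₂ lam = gpMeasure (θ₁ + θ₂) lam := by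
  rw [Measure.ext_iff_singleton]
  intro n
  simp only [Measure.conv_apply_singleton_eq_sum_antidiagonal, gpMeasure_singleton,
    ← sum_antidiagonal_gpWeight_mul]
  rw [ENNReal.ofReal_sum_of_nonneg fun p _ =>
    mul_nonneg (gpWeight_nonneg hθ₁ hlam _) (gpWeight_nonneg hθ₂ hlam _)]
  exact Finset.sum_congr rfl fun p _ => (ENNReal.ofReal_mul (gpWeight_nonneg hθ₁ hlam _)).symm

theorem gpdMeasure_conv {θ₁ θ₂ θ₃ θ₄ lam : ℝ} (hθ₁ : 0 ≤ θ₁) (hθ₂ : 0 ≤ θ₂) (hθ₃ : 0 ≤ θ₃)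
    (hθ₄ : 0 ≤ θ₄) (hlam : 0 ≤ lam) :
    gpdMeasure θ₁ θ₂ lam ∗ gpdMeasure θ₃ θ₄ lam = gpdMeasure (θ₁ + θ₃) (θ₂ + θ₄) lam := by
  let cast : ℕ →+ ℤ := Nat.castAddMonoidHom ℤ
  have hpos := Measure.map_conv_addMonoidHom (μ := gpMeasure θ₁ lam) (ν := gpMeasure θ₃ lam) cast
    (measurable_of_countable _)
  have hneg := Measure.map_conv_addMonoidHom (μ := gpMeasure θ₂ lam) (ν := gpMeasure θ₄ lam)
    (negAddMonoidHom.comp cast) (measurable_of_countable _)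
  rw [gpMeasure_conv hθ₁ hθ₃ hlam] at hpos
  rw [gpMeasure_conv hθ₂ hθ₄ hlam] at hneg
  rw [gpdMeasure, gpdMeasure, gpdMeasure, Measure.conv_conv_conv_comm]
  exact congrArg₂ (· ∗ ·) hpos.symm hneg.symm

theorem lintegral_gpMeasure (θ lam : ℝ) (f : ℕ → ℝ≥0∞) :
    ∫⁻ n, f n ∂gpMeasure θ lam = ∑' n, ENNReal.ofReal (gpWeight θ lam n) * f n := by
  rw [gpMeasure, lintegral_withDensity_eq_lintegral_mul _ (measurable_of_countable _)
    (measurable_of_countable _), lintegral_count]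
  rfl

theorem map_natCast_gpMeasure_singleton (θ lam : ℝ) (k : ℤ) :
    (gpMeasure θ lam).map (fun n : ℕ => (n : ℤ)) {k} =
      if 0 ≤ k then ENNReal.ofReal (gpWeight θ lam k.toNat) else 0 := by
  rw [Measure.map_apply (measurable_of_countable _) (measurableSet_singleton k)]
  split_ifs with hk
  · obtain ⟨m, rfl⟩ := Int.eq_ofNat_of_zero_le hk
    rw [Int.toNat_natCast, ← gpMeasure_singleton]
    congr 1
    ext n
    simp
  · convert measure_empty (μ := gpMeasure θ lam)
    ext n
    simp only [Set.mem_preimage, Set.mem_singleton_iff, Set.mem_empty_iff_false, iff_false]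
    omega

/-- `P(X' = s + z, Y' = s)` for independent `X' ~ GP(θ₁, λ)` and `Y' ~ GP(θ₂, λ)`. -/
noncomputable def gpdSummand (θ₁ θ₂ lam : ℝ) (z : ℤ) (s : ℕ) : ℝ :=
  if 0 ≤ (s : ℤ) + z then gpWeight θ₁ lam ((s : ℤ) + z).toNat * gpWeight θ₂ lam s else 0

theorem gpdSummand_nonneg {θ₁ θ₂ lam : ℝ} (hθ₁ : 0 ≤ θ₁) (hθ₂ : 0 ≤ θ₂) (hlam : 0 ≤ lam)
    (z : ℤ) (s : ℕ) : 0 ≤ gpdSummand θ₁ θ₂ lam z s := by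
  unfold gpdSummand
  split_ifs
  · exact mul_nonneg (gpWeight_nonneg hθ₁ hlam _) (gpWeight_nonneg hθ₂ hlam _)
  · exact le_rfl

theorem summable_gpdSummand {θ₁ θ₂ lam : ℝ} (hθ₁ : 0 ≤ θ₁) (hθ₂ : 0 ≤ θ₂) (hlam₀ : 0 ≤ lam)
    (hlam₁ : lam < 1) (z : ℤ) : Summable (gpdSummand θ₁ θ₂ lam z) := by
  have h₁ := summable_gpWeight hθ₁ hlam₀ hlam₁
  refine Summable.of_nonneg_of_le (gpdSummand_nonneg hθ₁ hθ₂ hlam₀ z) (fun s => ?_)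
    ((summable_gpWeight hθ₂ hlam₀ hlam₁).mul_left (∑' n, gpWeight θ₁ lam n))
  unfold gpdSummand
  split_ifs
  · exact mul_le_mul_of_nonneg_right
      (h₁.le_tsum _ fun n _ => gpWeight_nonneg hθ₁ hlam₀ n) (gpWeight_nonneg hθ₂ hlam₀ s)
  · exact mul_nonneg (tsum_nonneg (gpWeight_nonneg hθ₁ hlam₀)) (gpWeight_nonneg hθ₂ hlam₀ s)

theorem gpdPmf_eq_tsum {θ₁ θ₂ : ℝ} (hθ₁ : θ₁ ≠ 0) (hθ₂ : θ₂ ≠ 0) (lam : ℝ) (z : ℤ) :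
    gpdPmf θ₁ θ₂ lam z = ∑' s, gpdSummand θ₁ θ₂ lam z s := by
  rw [gpdPmf, ← tsum_mul_left]
  refine tsum_congr fun s => ?_
  unfold gpdSummand
  split_ifs with h
  · obtain ⟨m, hm⟩ := Int.eq_ofNat_of_zero_le h
    have hmℝ : (s : ℝ) + z = m := by exact_mod_cast hm
    have hexp : Real.exp (-θ₁ - θ₂ - z * lam) * Real.exp (-2 * s * lam) =
        Real.exp (-θ₁ - m * lam) * Real.exp (-θ₂ - s * lam) := by
      rw [← Real.exp_add, ← Real.exp_add, ← hmℝ]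
      ring_nf
    rw [hm, Int.toNat_natCast, hmℝ, mul_rpow_sub_one_eq_abelPoly hθ₁,
      mul_rpow_sub_one_eq_abelPoly hθ₂, gpWeight, gpWeight]
    linear_combination (abelPoly lam s θ₂ / s ! * (abelPoly lam m θ₁ / m !)) * hexp
  · rw [mul_zero]

theorem gpdMeasure_singleton {θ₁ θ₂ lam : ℝ} (hθ₁ : 0 < θ₁) (hθ₂ : 0 < θ₂) (hlam₀ : 0 ≤ lam)
    (hlam₁ : lam < 1) (z : ℤ) :
    gpdMeasure θ₁ θ₂ lam {z} = ENNReal.ofReal (gpdPmf θ₁ θ₂ lam z) := by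
  rw [gpdMeasure, Measure.conv_apply_singleton,
    lintegral_map (measurable_of_countable _) (measurable_of_countable _), lintegral_gpMeasure,
    gpdPmf_eq_tsum hθ₁.ne' hθ₂.ne', ENNReal.ofReal_tsum_of_nonneg
      (gpdSummand_nonneg hθ₁.le hθ₂.le hlam₀ z) (summable_gpdSummand hθ₁.le hθ₂.le hlam₀ hlam₁ z)]
  refine tsum_congr fun s => ?_
  rw [map_natCast_gpMeasure_singleton, gpdSummand, sub_neg_eq_add, add_comm z]
  split_ifs
  · rw [ENNReal.ofReal_mul (gpWeight_nonneg hθ₁.le hlam₀ _), mul_comm]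
  · rw [mul_zero, ENNReal.ofReal_zero]

theorem hasGPD_iff_map_eq {Ω : Type*} [MeasurableSpace Ω] {P : Measure Ω} {Z : Ω → ℤ}
    (hZ : Measurable Z) {θ₁ θ₂ lam : ℝ} (hθ₁ : 0 < θ₁) (hθ₂ : 0 < θ₂) (hlam₀ : 0 ≤ lam)
    (hlam₁ : lam < 1) : HasGPD P Z θ₁ θ₂ lam ↔ P.map Z = gpdMeasure θ₁ θ₂ lam := by
  simp only [HasGPD, Measure.ext_iff_singleton, Measure.map_apply hZ (measurableSet_singleton _),
    gpdMeasure_singleton hθ₁ hθ₂ hlam₀ hlam₁]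
  rfl

end GeneralizedPoisson

open GeneralizedPoisson

/-- Convolution property of the GPD: the sum of two independent generalized Poisson
difference random variables with parameters `(θ₁, θ₂, λ)` and `(θ₃, θ₄, λ)` is a
generalized Poisson difference random variable with parameters `(θ₁+θ₃, θ₂+θ₄, λ)`. -/
theorem gpd_convolution_add {Ω : Type*} [MeasurableSpace Ω] (P : Measure Ω)
    [IsProbabilityMeasure P] (X Y : Ω → ℤ) (θ1 θ2 θ3 θ4 lam : ℝ)
    (hθ1 : 0 < θ1) (hθ2 : 0 < θ2) (hθ3 : 0 < θ3) (hθ4 : 0 < θ4)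
    (hlam0 : 0 ≤ lam) (hlam1 : lam < 1)
    (hXm : Measurable X) (hYm : Measurable Y)
    (hX : HasGPD P X θ1 θ2 lam) (hY : HasGPD P Y θ3 θ4 lam)
    (hindep : IndepFun X Y P) :
    HasGPD P (fun ω => X ω + Y ω) (θ1 + θ3) (θ2 + θ4) lam := by
  rw [hasGPD_iff_map_eq hXm hθ1 hθ2 hlam0 hlam1] at hX
  rw [hasGPD_iff_map_eq hYm hθ3 hθ4 hlam0 hlam1] at hY
  refine (hasGPD_iff_map_eq (hXm.add hYm) (add_pos hθ1 hθ3) (add_pos hθ2 hθ4) hlam0 hlam1).2 ?_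
  rw [← gpdMeasure_conv hθ1.le hθ2.le hθ3.le hθ4.le hlam0, ← hX, ← hY]
  exact hindep.map_add_eq_map_conv_map hXm hYm
end
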